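/- Let (M,g) be a complete Riemannian manifold and X a C¹ vector field on M such that ∫_M |X| dv_g < ∞ and ∫_M |div(X)| dv_g < ∞. Then ∫_M div(X) dv_g = 0. -/

import Mathlib

/-!
Let `χ` be a bump function equal to `1` near the origin and `χₖ x = χ (x / (k + 1))`. Since
`div (χₖ X) = χₖ div X + dχₖ (X)` and a compactly supported field has `∫ div = tr ∫ D(χₖ X) = 0`,
we get `∫ χₖ div X = -∫ dχₖ (X)`. The right side is bounded by `‖dχ‖∞ ∫ ‖X‖ / (k + 1) → 0`,
while the left side tends to `∫ div X` by dominated convergence, since `div X` is integrable.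
-/

open MeasureTheory Filter Topology

section Limits

variable {α F : Type*} [MeasurableSpace α] {μ : Measure α}
  [NormedAddCommGroup F] [NormedSpace ℝ F]

theorem tendsto_integral_smul_of_tendsto_one {φ : ℕ → α → ℝ} {f : α → F}
    (hf : Integrable f μ) (hφm : ∀ k, AEStronglyMeasurable (φ k) μ)
    (hφ1 : ∀ k x, |φ k x| ≤ 1) (hφ : ∀ x, Tendsto (fun k ↦ φ k x) atTop (𝓝 1)) :
    Tendsto (fun k ↦ ∫ x, φ k x • f x ∂μ) atTop (𝓝 (∫ x, f x ∂μ)) := by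
  refine tendsto_integral_of_dominated_convergence (fun x ↦ ‖f x‖)
    (fun k ↦ (hφm k).smul hf.1) hf.norm (fun k ↦ ae_of_all _ fun x ↦ ?_)
    (ae_of_all _ fun x ↦ ?_)
  · rw [norm_smul, Real.norm_eq_abs]
    exact mul_le_of_le_one_left (norm_nonneg _) (hφ1 k x)
  · simpa using (hφ x).smul_const (f x)

theorem tendsto_integral_of_norm_le_mul {ι : Type*} {l : Filter ι} {g : ι → α → F}
    {h : α → ℝ} {ε : ι → ℝ} (hh : Integrable h μ) (hε : Tendsto ε l (𝓝 0))
    (hg : ∀ i x, ‖g i x‖ ≤ ε i * h x) :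
    Tendsto (fun i ↦ ∫ x, g i x ∂μ) l (𝓝 0) := by
  refine squeeze_zero_norm (fun i ↦ ?_) (by simpa using hε.mul_const (∫ x, h x ∂μ))
  rw [← integral_const_mul]
  exact norm_integral_le_of_norm_le (hh.const_mul _) (ae_of_all _ (hg i))

end Limits

theorem norm_fderiv_comp_smul_le {E F : Type*} [NormedAddCommGroup E] [NormedSpace ℝ E]
    [NormedAddCommGroup F] [NormedSpace ℝ F] {f : E → F} {C : ℝ}
    (hf : ∀ y, ‖fderiv ℝ f y‖ ≤ C) (c : ℝ) (x : E) :
    ‖fderiv ℝ (fun y ↦ f (c • y)) x‖ ≤ |c| * C := by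
  rw [fderiv_comp_smul, norm_smul, Real.norm_eq_abs]
  exact mul_le_mul_of_nonneg_left (hf _) (abs_nonneg c)

section Divergence

variable {E : Type*} [NormedAddCommGroup E] [NormedSpace ℝ E] [FiniteDimensional ℝ E]

variable (E) in
noncomputable def traceCLM : (E →L[ℝ] E) →L[ℝ] ℝ :=
  (LinearMap.trace ℝ E ∘ₗ ContinuousLinearMap.coeLM ℝ).toContinuousLinearMap

noncomputable def divergence (X : E → E) (x : E) : ℝ :=
  LinearMap.trace ℝ E (fderiv ℝ X x)

theorem divergence_eq_traceCLM (X : E → E) :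
    divergence X = fun x ↦ traceCLM E (fderiv ℝ X x) :=
  rfl

theorem ContDiff.continuous_divergence {X : E → E} (hX : ContDiff ℝ 1 X) :
    Continuous (divergence X) :=
  (traceCLM E).continuous.comp (hX.continuous_fderiv one_ne_zero)

theorem divergence_smul {φ : E → ℝ} {X : E → E} {x : E} (hφ : DifferentiableAt ℝ φ x)
    (hX : DifferentiableAt ℝ X x) :
    divergence (fun y ↦ φ y • X y) x = φ x * divergence X x + fderiv ℝ φ x (X x) := by
  simp [divergence, fderiv_fun_smul hφ hX, LinearMap.trace_smulRight]

end Divergence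

section IntegralDivergence

variable {E F : Type*} [NormedAddCommGroup E] [NormedSpace ℝ E] [FiniteDimensional ℝ E]
  [MeasurableSpace E] [BorelSpace E] {μ : Measure E} [μ.IsAddHaarMeasure]
  [NormedAddCommGroup F] [NormedSpace ℝ F]

theorem integral_fderiv_apply_eq_zero_of_integrable {Y : E → F} {v : E}
    (hY : Differentiable ℝ Y) (hY' : Integrable (fun x ↦ fderiv ℝ Y x v) μ)
    (hYi : Integrable Y μ) : ∫ x, fderiv ℝ Y x v ∂μ = 0 := by
  simpa using integral_smul_fderiv_eq_neg_fderiv_smul_of_integrable (μ := μ) (v := v)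
    (f := fun _ ↦ (1 : ℝ)) (g := Y) (by simp) (by simpa using hY') (by simpa using hYi)
    (fun x _ ↦ differentiableAt_const _) (fun x _ ↦ hY x)

theorem integral_fderiv_eq_zero_of_hasCompactSupport {Y : E → F} (hY : ContDiff ℝ 1 Y)
    (hYc : HasCompactSupport Y) : ∫ x, fderiv ℝ Y x ∂μ = 0 := by
  have hY' : Integrable (fderiv ℝ Y) μ :=
    (hY.continuous_fderiv one_ne_zero).integrable_of_hasCompactSupport (hYc.fderiv (𝕜 := ℝ))
  ext v
  rw [ContinuousLinearMap.integral_apply hY', zero_apply]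
  exact integral_fderiv_apply_eq_zero_of_integrable (hY.differentiable one_ne_zero)
    (hY'.apply_continuousLinearMap v) (hY.continuous.integrable_of_hasCompactSupport hYc)

theorem integral_divergence_eq_zero_of_hasCompactSupport {Y : E → E} (hY : ContDiff ℝ 1 Y)
    (hYc : HasCompactSupport Y) : ∫ x, divergence Y x ∂μ = 0 := by
  rw [divergence_eq_traceCLM, ContinuousLinearMap.integral_comp_comm,
    integral_fderiv_eq_zero_of_hasCompactSupport hY hYc, map_zero]
  exact (hY.continuous_fderiv one_ne_zero).integrable_of_hasCompactSupport
    (hYc.fderiv (𝕜 := ℝ))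

theorem integral_mul_divergence_eq_neg {φ : E → ℝ} {X : E → E} (hφ : ContDiff ℝ 1 φ)
    (hφc : HasCompactSupport φ) (hX : ContDiff ℝ 1 X) :
    ∫ x, φ x * divergence X x ∂μ = -∫ x, fderiv ℝ φ x (X x) ∂μ := by
  have h := integral_divergence_eq_zero_of_hasCompactSupport (μ := μ)
    (Y := fun x ↦ φ x • X x) (hφ.smul hX) hφc.smul_right
  simp_rw [divergence_smul (hφ.differentiable one_ne_zero _)
    (hX.differentiable one_ne_zero _)] at h
  rw [integral_add] at h
  · exact eq_neg_of_add_eq_zero_left h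
  · exact (hφ.continuous.mul hX.continuous_divergence).integrable_of_hasCompactSupport
      hφc.mul_right
  · exact ((hφ.continuous_fderiv one_ne_zero).clm_apply hX.continuous)
      |>.integrable_of_hasCompactSupport
        ((hφc.fderiv (𝕜 := ℝ)).mono fun x hx h0 ↦ hx (by simp [h0]))

theorem integral_divergence_eq_zero {X : E → E} (hX : ContDiff ℝ 1 X)
    (hXint : Integrable X μ) (hdivint : Integrable (divergence X) μ) :
    ∫ x, divergence X x ∂μ = 0 := by
  let χ : ContDiffBump (0 : E) := ⟨1, 2, one_pos, one_lt_two⟩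
  obtain ⟨C, hC⟩ := (χ.hasCompactSupport.fderiv (𝕜 := ℝ)).exists_bound_of_continuous
    ((χ.contDiff (n := 1)).continuous_fderiv one_ne_zero)
  let c : ℕ → ℝ := fun k ↦ ((k : ℝ) + 1)⁻¹
  have hc : Tendsto c atTop (𝓝 0) := by
    simpa [c, one_div] using tendsto_one_div_add_atTop_nhds_zero_nat (𝕜 := ℝ)
  let φ : ℕ → E → ℝ := fun k x ↦ χ (c k • x)
  have hφ : ∀ k, ContDiff ℝ 1 (φ k) := fun k ↦ χ.contDiff.comp (contDiff_const_smul _)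
  have ibp : ∀ k, ∫ x, φ k x * divergence X x ∂μ = -∫ x, fderiv ℝ (φ k) x (X x) ∂μ :=
    fun k ↦ integral_mul_divergence_eq_neg (hφ k)
      (χ.hasCompactSupport.comp_smul (by positivity)) hX
  have lhs : Tendsto (fun k ↦ ∫ x, φ k x * divergence X x ∂μ) atTop
      (𝓝 (∫ x, divergence X x ∂μ)) := by
    refine tendsto_integral_smul_of_tendsto_one hdivint
      (fun k ↦ (hφ k).continuous.aestronglyMeasurable)
      (fun k x ↦ abs_le.2 ⟨by linarith [χ.nonneg (x := c k • x)], χ.le_one⟩)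
      fun x ↦ ?_
    have hχ0 : χ 0 = 1 := χ.eventuallyEq_one.eq_of_nhds
    exact (χ.continuous.tendsto' 0 1 hχ0).comp (by simpa using hc.smul_const x)
  have rhs : Tendsto (fun k ↦ ∫ x, fderiv ℝ (φ k) x (X x) ∂μ) atTop (𝓝 0) := by
    refine tendsto_integral_of_norm_le_mul (ε := fun k ↦ |c k| * C) hXint.norm
      (by simpa using hc.abs.mul_const C) fun k x ↦ ?_
    exact ((fderiv ℝ (φ k) x).le_opNorm _).trans
      (mul_le_mul_of_nonneg_right (norm_fderiv_comp_smul_le hC _ _) (norm_nonneg _))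
  simp only [ibp] at lhs
  exact tendsto_nhds_unique lhs (by simpa using rhs.neg)

end IntegralDivergence

/-- Gaffney's theorem, formalized on the complete Riemannian manifold
`ℝⁿ` (Euclidean space with its flat metric and Lebesgue volume measure):
if a `C¹` vector field `X` satisfies `∫ |X| < ∞` and `∫ |div X| < ∞`,
then `∫ div X = 0`.  Here `div X x` is the trace of the derivative of `X`
at `x`, which is the Riemannian divergence for the Euclidean metric. -/
theorem gaffney_divergence_theorem {n : ℕ}
    (X : EuclideanSpace ℝ (Fin n) → EuclideanSpace ℝ (Fin n))
    (hX : ContDiff ℝ 1 X)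
    (div : EuclideanSpace ℝ (Fin n) → ℝ)
    (hdiv : ∀ x, div x = LinearMap.trace ℝ _ (fderiv ℝ X x).toLinearMap)
    (hXint : Integrable (fun x => ‖X x‖) volume)
    (hdivint : Integrable (fun x => |div x|) volume) :
    ∫ x, div x = 0 := by
  obtain rfl : div = divergence X := funext hdiv
  refine integral_divergence_eq_zero hX
    ((integrable_norm_iff hX.continuous.aestronglyMeasurable).1 hXint)
    ((integrable_norm_iff hX.continuous_divergence.aestronglyMeasurable).1 ?_)
  simpa only [Real.norm_eq_abs] using hdivint
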